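/- Let q ≥ 2 and n ≥ 1. The characteristic polynomial of the Laplacian of the nonbinary hypercube C_q(n) equals ∏_{k=0}^{n} ∏_{l=max(0,2k−n)}^{k} ∏_{j=k}^{n+l−k} ( x − (qj − (q−1)l) )^{m(k,l)}, where m(k,l) = (q−2)^l · C(n,l) · ( C(n−l, k−l) − C(n−l, k−l−1) ) (with C(m,−1) = 0 and 0^0 = 1). Equivalently, the Laplacian eigenvalues of C_q(n) are the numbers qj − (q−1)l, with j, k, l ranging as above, counted with multiplicity m(k,l). -/

import Mathlib

/-- The support of a `q`-ary `n`-tuple: the set of coordinates where it is nonzero. -/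
def supp {n q : ℕ} (a : Fin n → Fin q) : Finset (Fin n) :=
  Finset.univ.filter (fun i => (a i : ℕ) ≠ 0)

/-- The (one-sided) adjacency relation of the nonbinary hypercube. -/
def cubeAdjRel {n q : ℕ} (a b : Fin n → Fin q) : Prop :=
  (supp a ⊆ supp b ∨ supp b ⊆ supp a) ∧
    ((supp a).card + 1 = (supp b).card ∨ (supp b).card + 1 = (supp a).card) ∧
    ∀ i ∈ supp a ∩ supp b, a i = b i

/-- The nonbinary hypercube `C_q(n)`. -/
def nonbinaryCube (n q : ℕ) : SimpleGraph (Fin n → Fin q) :=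
  SimpleGraph.fromRel cubeAdjRel

/-- `C(m, r) - C(m, r-1)`, with the convention `C(m, -1) = 0`. -/
def chooseDiff (m r : ℕ) : ℕ :=
  m.choose r - if r = 0 then 0 else m.choose (r - 1)

/-!
`C_q(n)` is the `n`-th Cartesian power of the star `K_{1,q-1}` on `Fin q` centred at `0`: two
tuples are adjacent iff they differ in exactly one coordinate and one of the two entries there is
`0`. Its Laplacian is therefore the Kronecker sum `∑ᵢ 1 ⊗ ⋯ ⊗ L ⊗ ⋯ ⊗ 1` of the star Laplacian
`L`. Fix a symbol `w ≠ 0`; then `L` has the explicit eigenbasis `𝟙` (eigenvalue `0`), `q e₀ - 𝟙`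
(eigenvalue `q`) and `e_c - e_w` for `c ∉ {0, w}` (eigenvalue `1`), and tensor products of these
diagonalise the Laplacian of `C_q(n)`. The eigenvalue attached to a tuple with `a` coordinates
equal to `w` and `l` coordinates outside `{0, w}` is `q a + l`, and there are
`C(n, a) C(n - a, l) (q - 2)^l` such tuples. The substitution `a = j - l` and a telescoping sum of
the `chooseDiff` terms turn the stated product into this one.
-/

open Finset

namespace Matrix

variable {ι α R : Type*} [Fintype ι] [CommSemiring R]

def piKronecker (M : ι → Matrix α α R) : Matrix (ι → α) (ι → α) R :=
  of fun a b => ∏ i, M i (a i) (b i)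

@[simp]
theorem piKronecker_apply (M : ι → Matrix α α R) (a b : ι → α) :
    piKronecker M a b = ∏ i, M i (a i) (b i) := rfl

section Diagonal

variable [DecidableEq α]

theorem piKronecker_diagonal (d : ι → α → R) :
    piKronecker (fun i => diagonal (d i)) = diagonal fun b => ∏ i, d i (b i) := by
  ext a b
  by_cases hab : a = b
  · simp [hab]
  · obtain ⟨i, hi⟩ := Function.ne_iff.mp hab
    simp [diagonal_apply_ne _ hab, prod_eq_zero (mem_univ i), diagonal_apply_ne _ hi]

theorem piKronecker_one : piKronecker (1 : ι → Matrix α α R) = 1 := by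
  have h := piKronecker_diagonal (ι := ι) fun _ => (1 : α → R)
  simp only [diagonal_one, Pi.one_apply, prod_const_one] at h
  exact h

end Diagonal

section Mul

variable [DecidableEq ι] [Fintype α]

theorem piKronecker_mul (M N : ι → Matrix α α R) :
    piKronecker M * piKronecker N = piKronecker (M * N) := by
  ext a c
  simp only [mul_apply, piKronecker_apply, Pi.mul_apply, ← prod_mul_distrib, Fintype.prod_sum]

theorem piKronecker_mulVec (M : ι → Matrix α α R) (v : ι → α → R) :
    piKronecker M *ᵥ (fun b => ∏ i, v i (b i)) = fun a => ∏ i, (M i *ᵥ v i) (a i) := by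
  ext a
  simp only [mulVec, dotProduct, piKronecker_apply, ← prod_mul_distrib, Fintype.prod_sum]

end Mul

section KroneckerSum

variable [DecidableEq ι] [DecidableEq α]

/-- The Kronecker sum `∑ᵢ 1 ⊗ ⋯ ⊗ M ⊗ ⋯ ⊗ 1`, with `M` in the `i`-th factor. -/
def piKroneckerSum (M : Matrix α α R) : Matrix (ι → α) (ι → α) R :=
  ∑ i, piKronecker (Function.update 1 i M)

theorem piKronecker_update_one_apply (i : ι) (M : Matrix α α R) (a b : ι → α) :
    piKronecker (Function.update 1 i M) a b =
      if ∀ j ≠ i, a j = b j then M (a i) (b i) else 0 := by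
  rw [piKronecker_apply, Fintype.prod_eq_mul_prod_compl i, Function.update_self]
  have : ∏ j ∈ {i}ᶜ, Function.update (1 : ι → Matrix α α R) i M j (a j) (b j) =
      if ∀ j ≠ i, a j = b j then 1 else 0 := by
    rw [prod_congr rfl fun j hj => by rw [Function.update_of_ne (by simpa using hj)]]
    simp [one_apply, prod_boole]
  rw [this]
  split_ifs <;> simp

theorem piKroneckerSum_apply (M : Matrix α α R) (a b : ι → α) :
    piKroneckerSum M a b = ∑ i, if ∀ j ≠ i, a j = b j then M (a i) (b i) else 0 := by
  simp only [piKroneckerSum, sum_apply, piKronecker_update_one_apply]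

theorem piKroneckerSum_diagonal (d : α → R) :
    piKroneckerSum (ι := ι) (diagonal d) = diagonal fun b => ∑ i, d (b i) := by
  have (i : ι) : Function.update (1 : ι → Matrix α α R) i (diagonal d) =
      fun j => diagonal (Function.update (1 : ι → α → R) i d j) := by
    ext j : 1
    by_cases hj : j = i <;> simp [hj]
  simp only [piKroneckerSum, this, piKronecker_diagonal]
  ext a b
  by_cases hab : a = b <;> simp [sum_apply, hab, Function.update_apply, ite_apply]

variable [Fintype α]

theorem piKroneckerSum_mulVec_one (M : Matrix α α R) :
    piKroneckerSum (ι := ι) M *ᵥ 1 = fun a => ∑ i, (M *ᵥ 1) (a i) := by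
  have hone : (1 : (ι → α) → R) = fun b => ∏ i, (1 : ι → α → R) i (b i) := by
    ext b
    simp
  ext a
  rw [piKroneckerSum, sum_mulVec, hone]
  simp only [piKronecker_mulVec]
  simp [Function.update_apply, apply_ite (· *ᵥ (1 : α → R)), ite_apply]

theorem piKroneckerSum_mul_piKronecker {M U N : Matrix α α R} (h : M * U = U * N) :
    piKroneckerSum M * piKronecker (fun _ : ι => U) =
      piKronecker (fun _ : ι => U) * piKroneckerSum N := by
  have (i : ι) : Function.update (1 : ι → Matrix α α R) i M * (fun _ => U) =
      (fun _ => U) * Function.update (1 : ι → Matrix α α R) i N := by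
    ext j : 1
    by_cases hj : j = i <;> simp [hj, h]
  simp only [piKroneckerSum, sum_mul, mul_sum, piKronecker_mul, this]

end KroneckerSum

theorem charpoly_eq_of_mul_eq_mul {n R : Type*} [Fintype n] [DecidableEq n] [CommRing R]
    {M N P Q : Matrix n n R} (hQP : Q * P = 1) (h : M * P = P * N) :
    M.charpoly = N.charpoly := by
  have hM : M = P * (N * Q) := by
    rw [← mul_assoc, ← h, mul_assoc, mul_eq_one_comm.mp hQP, mul_one]
  rw [hM, charpoly_mul_comm, mul_assoc, hQP, mul_one]

end Matrix

theorem Finset.prod_powerset_apply_card {β M : Type*} [CommMonoid M] (f : ℕ → M) (s : Finset β) :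
    ∏ t ∈ s.powerset, f #t = ∏ m ∈ range (#s + 1), f m ^ (#s).choose m := by
  classical
  calc ∏ t ∈ s.powerset, f #t = ∏ m ∈ range (#s + 1), ∏ t ∈ s.powerset with #t = m, f #t :=
        (prod_fiberwise_of_maps_to (fun t ht => by
          simpa [Nat.lt_succ_iff] using card_le_card (mem_powerset.1 ht)) _).symm
    _ = ∏ m ∈ range (#s + 1), f m ^ (#s).choose m := by
        refine prod_congr rfl fun m _ => ?_
        rw [← powersetCard_eq_filter, ← card_powersetCard, ← prod_const]
        exact prod_congr rfl fun t ht => by rw [(mem_powersetCard.1 ht).2]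

section Count

variable {ι α : Type*} [Fintype ι] [DecidableEq ι] [Fintype α] [DecidableEq α] {z w : α}

theorem card_filter_levelSets_eq (hwz : w ≠ z) {A L : Finset ι} (hAL : Disjoint A L) :
    #{b : ι → α | ({i | b i = w} : Finset ι) = A ∧ ({i | b i ≠ z ∧ b i ≠ w} : Finset ι) = L} =
      (Fintype.card α - 2) ^ #L := by
  let mid : Finset α := {c | c ≠ z ∧ c ≠ w}
  let S : ι → Finset α := fun i => if i ∈ A then {w} else if i ∈ L then mid else {z}
  have hS : ({b : ι → α | ({i | b i = w} : Finset ι) = A ∧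
      ({i | b i ≠ z ∧ b i ≠ w} : Finset ι) = L} : Finset _) = Fintype.piFinset S := by
    ext b
    simp only [mem_filter, mem_univ, true_and, Fintype.mem_piFinset]
    rw [Finset.ext_iff, Finset.ext_iff, ← forall_and]
    refine forall_congr' fun i => ?_
    grind [disjoint_left]
  have hmid : #mid = Fintype.card α - 2 := by
    have : mid = univ \ {z, w} := by
      ext
      simp [mid, not_or]
    rw [this, card_sdiff_of_subset (subset_univ _), card_univ, card_pair hwz.symm]
  have hcard (i : ι) : #(S i) = if i ∈ L then Fintype.card α - 2 else 1 := by
    by_cases hiA : i ∈ A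
    · simp [S, hiA, disjoint_left.mp hAL hiA]
    · by_cases hiL : i ∈ L <;> simp [S, hiA, hiL, hmid]
  rw [hS, Fintype.card_piFinset, prod_congr rfl fun i _ => hcard i, prod_ite_mem, univ_inter,
    prod_const]

theorem prod_filter_levelSet_eq_prod_range (hwz : w ≠ z) {M : Type*} [CommMonoid M]
    (f : ℕ → ℕ → M) (A : Finset ι) :
    ∏ b : ι → α with ({i | b i = w} : Finset ι) = A, f #{i | b i = w} #{i | b i ≠ z ∧ b i ≠ w} =
      ∏ l ∈ range (Fintype.card ι - #A + 1),
        f #A l ^ ((Fintype.card α - 2) ^ l * (Fintype.card ι - #A).choose l) := by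
  have hmaps : ∀ b ∈ ({b : ι → α | ({i | b i = w} : Finset ι) = A} : Finset _),
      ({i | b i ≠ z ∧ b i ≠ w} : Finset ι) ∈ Aᶜ.powerset := by
    intro b hb
    simp only [mem_filter, mem_univ, true_and] at hb
    subst hb
    rw [mem_powerset]
    intro i
    simp +contextual
  rw [← prod_fiberwise_of_maps_to hmaps]
  have hL (L : Finset ι) (hL : L ∈ Aᶜ.powerset) :
      ∏ b ∈ {b : ι → α | ({i | b i = w} : Finset ι) = A} with
        ({i | b i ≠ z ∧ b i ≠ w} : Finset ι) = L, f #{i | b i = w} #{i | b i ≠ z ∧ b i ≠ w} =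
        f #A #L ^ (Fintype.card α - 2) ^ #L := by
    rw [filter_filter, prod_congr rfl fun b hb => by
        rw [(mem_filter.1 hb).2.1, (mem_filter.1 hb).2.2],
      prod_const, card_filter_levelSets_eq hwz
        (disjoint_of_subset_right (mem_powerset.1 hL) disjoint_compl_right)]
  rw [prod_congr rfl hL, prod_powerset_apply_card (fun l => f #A l ^ (Fintype.card α - 2) ^ l),
    card_compl]
  simp only [← pow_mul]

theorem prod_pi_eq_prod_range_pow_choose (hwz : w ≠ z) {M : Type*} [CommMonoid M]
    (f : ℕ → ℕ → M) :
    ∏ b : ι → α, f #{i | b i = w} #{i | b i ≠ z ∧ b i ≠ w} =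
      ∏ a ∈ range (Fintype.card ι + 1), ∏ l ∈ range (Fintype.card ι - a + 1),
        f a l ^ ((Fintype.card α - 2) ^ l * (Fintype.card ι - a).choose l *
          (Fintype.card ι).choose a) := by
  calc ∏ b : ι → α, f #{i | b i = w} #{i | b i ≠ z ∧ b i ≠ w}
      = ∏ A : Finset ι, ∏ l ∈ range (Fintype.card ι - #A + 1),
          f #A l ^ ((Fintype.card α - 2) ^ l * (Fintype.card ι - #A).choose l) := by
        rw [← prod_fiberwise univ fun b => ({i | b i = w} : Finset ι)]
        exact prod_congr rfl fun A _ => prod_filter_levelSet_eq_prod_range hwz f A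
    _ = _ := by
        rw [← powerset_univ,
          prod_powerset_apply_card (fun a => ∏ l ∈ range (Fintype.card ι - a + 1),
            f a l ^ ((Fintype.card α - 2) ^ l * (Fintype.card ι - a).choose l)),
          card_univ]
        simp only [← prod_pow, ← pow_mul]

end Count

namespace SimpleGraph

open Matrix Polynomial

/-- The Cartesian power `H □ ⋯ □ H` indexed by `ι`. -/
def boxPi (ι : Type*) {α : Type*} (H : SimpleGraph α) : SimpleGraph (ι → α) where
  Adj a b := ∃ i, H.Adj (a i) (b i) ∧ ∀ j ≠ i, a j = b j
  symm := ⟨fun _ _ ⟨i, h, h'⟩ => ⟨i, h.symm, fun j hj => (h' j hj).symm⟩⟩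
  loopless := ⟨fun _ ⟨_, h, _⟩ => H.loopless.irrefl _ h⟩

variable {ι α : Type*}

@[simp]
theorem boxPi_adj {H : SimpleGraph α} {a b : ι → α} :
    (boxPi ι H).Adj a b ↔ ∃ i, H.Adj (a i) (b i) ∧ ∀ j ≠ i, a j = b j :=
  Iff.rfl

section BoxPi

variable [Fintype ι] [DecidableEq ι] [DecidableEq α] {H : SimpleGraph α} [DecidableRel H.Adj]
  [DecidableRel (boxPi ι H).Adj]

theorem adjMatrix_boxPi (R : Type*) [CommSemiring R] :
    (boxPi ι H).adjMatrix R = piKroneckerSum (H.adjMatrix R) := by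
  ext a b
  simp only [adjMatrix_apply, piKroneckerSum_apply, ← ite_and]
  by_cases hab : (boxPi ι H).Adj a b
  · obtain ⟨i, hi, hoff⟩ := hab
    rw [if_pos ⟨i, hi, hoff⟩, sum_eq_single i (fun j _ hj => if_neg fun ⟨_, hj'⟩ =>
      hj'.ne (hoff j hj)) (by simp), if_pos ⟨hoff, hi⟩]
  · rw [if_neg hab, sum_eq_zero fun i _ => if_neg fun ⟨hoff, hi⟩ => hab ⟨i, hi, hoff⟩]

variable [Fintype α]

theorem degree_boxPi (a : ι → α) : (boxPi ι H).degree a = ∑ i, H.degree (a i) := by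
  have h := congrFun (piKroneckerSum_mulVec_one (ι := ι) (H.adjMatrix ℕ)) a
  rw [← adjMatrix_boxPi] at h
  simpa using h

theorem lapMatrix_boxPi (R : Type*) [CommRing R] :
    (boxPi ι H).lapMatrix R = piKroneckerSum (H.lapMatrix R) := by
  have hdeg : (boxPi ι H).degMatrix R = piKroneckerSum (H.degMatrix R) := by
    simp [degMatrix, piKroneckerSum_diagonal, degree_boxPi]
  ext a b
  simp [lapMatrix, hdeg, adjMatrix_boxPi, piKroneckerSum_apply, ← sum_sub_distrib, ite_sub_ite]

theorem charpoly_lapMatrix_boxPi {R : Type*} [CommRing R] {U V : Matrix α α R} {d : α → R}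
    (hVU : V * U = 1) (hU : H.lapMatrix R * U = U * diagonal d) :
    ((boxPi ι H).lapMatrix R).charpoly = ∏ b : ι → α, (X - C (∑ i, d (b i))) := by
  rw [lapMatrix_boxPi, ← charpoly_diagonal, ← piKroneckerSum_diagonal]
  refine charpoly_eq_of_mul_eq_mul (Q := piKronecker fun _ => V) ?_
    (piKroneckerSum_mul_piKronecker hU)
  simp only [piKronecker_mul, Pi.mul_def, hVU]
  exact piKronecker_one

end BoxPi

section Star

variable [Fintype α] [DecidableEq α] {K : Type*} [Field K] (z w : α)

theorem starGraph_lapMatrix_mulVec (v : α → K) :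
    (starGraph z).lapMatrix K *ᵥ v =
      fun s => if s = z then Fintype.card α * v z - ∑ t, v t else v s - v z := by
  ext s
  rw [lapMatrix_mulVec_apply]
  by_cases hs : s = z
  · subst hs
    have hnbr : (starGraph s).neighborFinset s = univ.erase s := by
      ext
      simp [eq_comm]
    have hcard : 1 ≤ Fintype.card α := Fintype.card_pos_iff.mpr ⟨s⟩
    rw [degree_starGraph_center, hnbr, sum_erase_eq_sub (mem_univ s), Nat.cast_sub hcard]
    simp only [Nat.cast_one, if_true]
    ring
  · have hnbr : (starGraph z).neighborFinset s = {z} := by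
      ext
      grind [mem_neighborFinset, starGraph_adj]
    simp [hnbr, hs, degree_starGraph_of_ne_center hs]

def starLapEigenvector (c : α) : α → K :=
  if c = z then 1
  else if c = w then (Fintype.card α : K) • Pi.single z 1 - 1
  else Pi.single c 1 - Pi.single w 1

def starLapEigenvalue (c : α) : ℕ :=
  if c = z then 0 else if c = w then Fintype.card α else 1

/-- The rows of the inverse of the matrix whose columns are the `starLapEigenvector`s. -/
def starLapDualVector (c : α) : α → K :=
  if c = z then (Fintype.card α : K)⁻¹ • 1
  else if c = w then
    ((Fintype.card α : K) * (Fintype.card α - 1))⁻¹ • starLapEigenvector z w w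
  else Pi.single c 1 - ((Fintype.card α : K) - 1)⁻¹ • (1 - Pi.single z 1)

variable {z w}

theorem starGraph_lapMatrix_mulVec_starLapEigenvector (hwz : w ≠ z) (c : α) :
    (starGraph z).lapMatrix K *ᵥ starLapEigenvector z w c =
      (starLapEigenvalue z w c : K) • starLapEigenvector z w c := by
  ext s
  rw [starGraph_lapMatrix_mulVec]
  unfold starLapEigenvector starLapEigenvalue
  split_ifs <;> simp_all [Pi.single_apply, sum_sub_distrib]
  · split_ifs <;> ring
  · grind

theorem starLapDualVector_dotProduct_starLapEigenvector [CharZero K] (hwz : w ≠ z) (c c' : α) :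
    (starLapDualVector z w c : α → K) ⬝ᵥ starLapEigenvector z w c' = if c = c' then 1 else 0 := by
  have hq : 1 < Fintype.card α := Fintype.one_lt_card_iff.mpr ⟨w, z, hwz⟩
  have hq0 : (Fintype.card α : K) ≠ 0 := by
    norm_cast
    omega
  have hq1 : (Fintype.card α : K) - 1 ≠ 0 := by
    rw [sub_ne_zero]
    norm_cast
    omega
  unfold starLapDualVector starLapEigenvector
  split_ifs <;> simp_all [dotProduct_sub, sub_dotProduct]
  field_simp

theorem sum_starLapEigenvalue [Fintype ι] (hwz : w ≠ z) (b : ι → α) :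
    ∑ i, starLapEigenvalue z w (b i) =
      Fintype.card α * #{i | b i = w} + #{i | b i ≠ z ∧ b i ≠ w} := by
  simp only [card_filter, mul_sum, ← sum_add_distrib]
  refine sum_congr rfl fun i _ => ?_
  unfold starLapEigenvalue
  split_ifs <;> simp_all

variable [Nontrivial α] [Fintype ι] [DecidableEq ι] (K) [CharZero K] (z)

theorem charpoly_lapMatrix_boxPi_starGraph [DecidableRel (boxPi ι (starGraph z)).Adj] :
    ((boxPi ι (starGraph z)).lapMatrix K).charpoly =
      ∏ a ∈ range (Fintype.card ι + 1), ∏ l ∈ range (Fintype.card ι - a + 1),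
        (X - C ((Fintype.card α * a + l : ℕ) : K)) ^ ((Fintype.card α - 2) ^ l *
          (Fintype.card ι - a).choose l * (Fintype.card ι).choose a) := by
  obtain ⟨w, hwz⟩ := exists_ne z
  let U : Matrix α α K := of fun s c => (starLapEigenvector z w c : α → K) s
  let V : Matrix α α K := of fun c s => (starLapDualVector z w c : α → K) s
  have hVU : V * U = 1 := by
    ext c c'
    simpa [U, V, mul_apply, one_apply, dotProduct] using
      starLapDualVector_dotProduct_starLapEigenvector (K := K) hwz c c'
  have hU : (starGraph z).lapMatrix K * U =
      U * diagonal fun c => (starLapEigenvalue z w c : K) := by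
    ext s c
    rw [mul_diagonal]
    simpa [U, mul_apply, mulVec, dotProduct, mul_comm] using
      congrFun (starGraph_lapMatrix_mulVec_starLapEigenvector (K := K) hwz c) s
  rw [charpoly_lapMatrix_boxPi hVU hU, ← prod_pi_eq_prod_range_pow_choose hwz]
  simp only [← Nat.cast_sum, sum_starLapEigenvalue hwz]

end Star

end SimpleGraph

-- For `2 * S ≤ m` the binomials `m.choose s` increase up to `s = S`, so the truncated
-- subtraction in `chooseDiff m s` is exact and the sum telescopes.
theorem sum_range_chooseDiff {m S : ℕ} (h : 2 * S ≤ m) :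
    ∑ s ∈ range (S + 1), chooseDiff m s = m.choose S := by
  induction S with
  | zero => simp [chooseDiff]
  | succ S ih =>
    rw [sum_range_succ, ih (by omega), chooseDiff, if_neg S.succ_ne_zero, Nat.add_sub_cancel]
    have := Nat.choose_le_succ_of_lt_half_left (r := S) (n := m) (by omega)
    omega

theorem Nat.choose_mul_choose_sub_comm (n a l : ℕ) :
    n.choose a * (n - a).choose l = n.choose l * (n - l).choose a := by
  by_cases h : a + l ≤ n
  · have ha := Nat.choose_mul (n := n) (k := a + l) (s := a) (by omega)
    have hl := Nat.choose_mul (n := n) (k := a + l) (s := l) (by omega)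
    rw [Nat.add_sub_cancel_left] at ha
    rw [Nat.add_sub_cancel] at hl
    rw [← ha, ← hl, Nat.choose_symm_add]
  · have hzero (x y : ℕ) (hxy : n < x + y) : n.choose x * (n - x).choose y = 0 := by
      rcases le_or_gt x n with hx | hx
      · simp [Nat.choose_eq_zero_of_lt (by omega : n - x < y)]
      · simp [Nat.choose_eq_zero_of_lt hx]
    rw [hzero a l (by omega), hzero l a (by omega)]

-- The substitution `a = j - l`, `s = k - l`.
theorem prod_range_Icc_Icc_eq_prod_range_range_range {M : Type*} [CommMonoid M] (n : ℕ)
    (h : ℕ → ℕ → ℕ → M) :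
    ∏ k ∈ range (n + 1), ∏ l ∈ Icc (2 * k - n) k, ∏ j ∈ Icc k (n + l - k), h k l j =
      ∏ a ∈ range (n + 1), ∏ l ∈ range (n - a + 1), ∏ s ∈ range (min a (n - a - l) + 1),
        h (s + l) l (a + l) := by
  simp only [prod_sigma']
  refine prod_nbij' (fun x => ⟨x.2.2 - x.2.1, x.2.1, x.1 - x.2.1⟩)
    (fun y => ⟨y.2.2 + y.2.1, y.2.1, y.1 + y.2.1⟩) ?_ ?_ ?_ ?_ ?_ <;>
  · rintro ⟨k, l, j⟩
    simp only [mem_sigma, mem_range, mem_Icc, Sigma.mk.injEq, heq_eq_eq, true_and]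
    intro
    first | omega | congr 1 <;> omega

theorem prod_pow_chooseDiff_eq {M : Type*} [CommMonoid M] (q c n : ℕ) (hq : 1 ≤ q)
    (F : ℕ → M) :
    ∏ k ∈ range (n + 1), ∏ l ∈ Icc (2 * k - n) k, ∏ j ∈ Icc k (n + l - k),
        F (q * j - (q - 1) * l) ^ (c ^ l * n.choose l * chooseDiff (n - l) (k - l)) =
      ∏ a ∈ range (n + 1), ∏ l ∈ range (n - a + 1),
        F (q * a + l) ^ (c ^ l * (n - a).choose l * n.choose a) := by
  rw [prod_range_Icc_Icc_eq_prod_range_range_range]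
  refine prod_congr rfl fun a ha => prod_congr rfl fun l hl => ?_
  rw [mem_range] at ha hl
  have hval : q * (a + l) - (q - 1) * l = q * a + l := by
    rw [Nat.sub_mul, one_mul, mul_add]
    have : l ≤ q * l := Nat.le_mul_of_pos_left l hq
    omega
  have hmin : (n - l).choose (min a (n - a - l)) = (n - l).choose a := by
    rcases le_total a (n - a - l) with h | h
    · rw [min_eq_left h]
    · rw [min_eq_right h, show n - a - l = n - l - a by omega, Nat.choose_symm (by omega)]
  simp only [hval, Nat.add_sub_cancel]
  rw [prod_pow_eq_pow_sum, ← mul_sum, sum_range_chooseDiff (by omega), hmin, mul_assoc,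
    ← Nat.choose_mul_choose_sub_comm, mul_comm (n.choose a), ← mul_assoc]

section NonbinaryCube

variable {n q : ℕ} {a b : Fin n → Fin q}

theorem cubeAdjRel_symm (h : cubeAdjRel a b) : cubeAdjRel b a :=
  ⟨h.1.symm, h.2.1.symm, fun i hi => (h.2.2 i (by rwa [inter_comm])).symm⟩

variable [NeZero q]

theorem mem_supp {i : Fin n} : i ∈ supp a ↔ a i ≠ 0 := by
  simp [supp, Fin.val_eq_zero_iff]

theorem supp_eq_insert {i : Fin n} (hb : b i ≠ 0) (h : ∀ j ≠ i, a j = b j) :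
    supp b = insert i (supp a) := by
  ext j
  by_cases hj : j = i
  · simp [mem_supp, hj, hb]
  · simp [mem_supp, hj, h j hj]

theorem exists_eq_zero_of_cubeAdjRel (hab : cubeAdjRel a b)
    (hcard : #(supp a) + 1 = #(supp b)) :
    ∃ i, a i = 0 ∧ b i ≠ 0 ∧ ∀ j ≠ i, a j = b j := by
  obtain ⟨hnest, -, hagree⟩ := hab
  have hsub : supp a ⊆ supp b := hnest.resolve_right fun h => by
    have := card_le_card h
    omega
  obtain ⟨i, hi⟩ := card_eq_one.mp (show #(supp b \ supp a) = 1 by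
    rw [card_sdiff_of_subset hsub]
    omega)
  have hmem (j : Fin n) : j ∈ supp b ∧ j ∉ supp a ↔ j = i := by
    rw [← mem_sdiff, hi, mem_singleton]
  refine ⟨i, ?_, ?_, fun j hj => ?_⟩
  · simpa [mem_supp] using ((hmem i).2 rfl).2
  · simpa [mem_supp] using ((hmem i).2 rfl).1
  · by_cases hja : j ∈ supp a
    · exact hagree j (mem_inter.2 ⟨hja, hsub hja⟩)
    · have hjb : j ∉ supp b := fun hjb => hj ((hmem j).1 ⟨hjb, hja⟩)
      simp only [mem_supp, not_not] at hja hjb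
      rw [hja, hjb]

theorem cubeAdjRel_of_eq_zero {i : Fin n} (ha : a i = 0) (hb : b i ≠ 0)
    (h : ∀ j ≠ i, a j = b j) : cubeAdjRel a b := by
  have hi : i ∉ supp a := by simp [mem_supp, ha]
  refine ⟨Or.inl ?_, Or.inl ?_, fun j hj => h j ?_⟩
  · rw [supp_eq_insert hb h]
    exact subset_insert i _
  · rw [supp_eq_insert hb h, card_insert_of_notMem hi]
  · rintro rfl
    exact hi (mem_inter.1 hj).1

theorem nonbinaryCube_eq_boxPi_starGraph :
    nonbinaryCube n q = SimpleGraph.boxPi (Fin n) (SimpleGraph.starGraph 0) := by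
  ext a b
  rw [nonbinaryCube, SimpleGraph.fromRel_adj, SimpleGraph.boxPi_adj]
  simp only [SimpleGraph.starGraph_adj]
  constructor
  · rintro ⟨-, hab⟩
    have hab : cubeAdjRel a b := hab.elim id cubeAdjRel_symm
    rcases hab.2.1 with hc | hc
    · obtain ⟨i, ha, hb, h⟩ := exists_eq_zero_of_cubeAdjRel hab hc
      exact ⟨i, ⟨fun e => hb (e ▸ ha), Or.inl ha⟩, h⟩
    · obtain ⟨i, hb, ha, h⟩ := exists_eq_zero_of_cubeAdjRel (cubeAdjRel_symm hab) hc
      exact ⟨i, ⟨fun e => ha (e ▸ hb), Or.inr hb⟩, fun j hj => (h j hj).symm⟩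
  · rintro ⟨i, ⟨hne, ha | hb⟩, h⟩
    · exact ⟨fun e => hne (congrFun e i), Or.inl (cubeAdjRel_of_eq_zero ha (ha ▸ hne.symm) h)⟩
    · exact ⟨fun e => hne (congrFun e i),
        Or.inr (cubeAdjRel_of_eq_zero hb (hb ▸ hne) fun j hj => (h j hj).symm)⟩

end NonbinaryCube

open scoped Classical in
theorem charpoly_lapMatrix_nonbinaryCube_general (q n : ℕ) (hq : 2 ≤ q) :
    ((nonbinaryCube n q).lapMatrix ℝ).charpoly =
      ∏ k ∈ Finset.range (n + 1), ∏ l ∈ Finset.Icc (2 * k - n) k,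
        ∏ j ∈ Finset.Icc k (n + l - k),
          (Polynomial.X - Polynomial.C ((q * j - (q - 1) * l : ℕ) : ℝ)) ^
            ((q - 2) ^ l * n.choose l * chooseDiff (n - l) (k - l)) := by
  have : NeZero q := ⟨by omega⟩
  have : Nontrivial (Fin q) := Fin.nontrivial_iff_two_le.mpr hq
  rw [nonbinaryCube_eq_boxPi_starGraph, SimpleGraph.charpoly_lapMatrix_boxPi_starGraph]
  simp only [Fintype.card_fin]
  exact (prod_pow_chooseDiff_eq q (q - 2) n (by omega) fun x =>
    Polynomial.X - Polynomial.C (x : ℝ)).symm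

open scoped Classical in
theorem charpoly_lapMatrix_nonbinaryCube (q n : ℕ) (hq : 2 ≤ q) (hn : 1 ≤ n) :
    ((nonbinaryCube n q).lapMatrix ℝ).charpoly =
      ∏ k ∈ Finset.range (n + 1), ∏ l ∈ Finset.Icc (2 * k - n) k,
        ∏ j ∈ Finset.Icc k (n + l - k),
          (Polynomial.X - Polynomial.C ((q * j - (q - 1) * l : ℕ) : ℝ)) ^
            ((q - 2) ^ l * n.choose l * chooseDiff (n - l) (k - l)) :=
  charpoly_lapMatrix_nonbinaryCube_general q n hq
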